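/- arXiv:1610.05932 — 2 statements merged into one kernel-verified Lean document; each statement's English description precedes it below -/
import Mathlib

section
/- Let 1 ≤ t ≤ s and let Q_t = {v ∈ F_q^s : w(v) ≤ t} be the set of vectors of Hamming weight at most t. Then the vanishing ideal I(Q_t) in F_q[x_1,...,x_s] equals the ideal generated by the elementary symmetric polynomials σ_{t+1},...,σ_s together with the field equations x_1^q−x_1,...,x_s^q−x_s. -/
open Finset MvPolynomial

section Aux

universe u

variable {F : Type u} [Field F] [Fintype F]

private lemma monomial_red {s : ℕ} (d : Fin s →₀ ℕ) (c : F) :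
    ∃ r ∈ restrictDegree (Fin s) F (Fintype.card F - 1),
      (monomial d c : MvPolynomial (Fin s) F) - r ∈
        Ideal.span (Set.range fun i : Fin s =>
          (X i : MvPolynomial (Fin s) F) ^ (Fintype.card F) - X i) := by
  have hq : 2 ≤ Fintype.card F := Fintype.one_lt_card
  suffices H : ∀ n (d : Fin s →₀ ℕ), d.sum (fun _ k => k) = n →
      ∃ r ∈ restrictDegree (Fin s) F (Fintype.card F - 1),
        (monomial d c : MvPolynomial (Fin s) F) - r ∈
          Ideal.span (Set.range fun i : Fin s =>
            (X i : MvPolynomial (Fin s) F) ^ (Fintype.card F) - X i) from H _ d rfl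
  intro n
  induction n using Nat.strong_induction_on with
  | _ n ih =>
    intro d hd
    by_cases hall : ∀ i, d i ≤ Fintype.card F - 1
    · refine ⟨monomial d c, ?_, by simp⟩
      rw [mem_restrictDegree]
      intro e he i
      have := support_monomial_subset he
      rw [Finset.mem_singleton] at this
      subst this; exact hall i
    · push_neg at hall
      obtain ⟨i, hi⟩ := hall
      have hiq : Fintype.card F ≤ d i := by omega
      set d' : Fin s →₀ ℕ := d - Finsupp.single i (Fintype.card F) with hd'
      have hdd : d = d' + Finsupp.single i (Fintype.card F) := by
        ext j
        rcases eq_or_ne j i with rfl | hj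
        · simp [hd', Finsupp.single_apply]; omega
        · simp [hd', Finsupp.single_apply, hj.symm, Ne.symm hj]
      have hsum : d'.sum (fun _ k => k) + Fintype.card F = n := by
        rw [← hd, hdd, Finsupp.sum_add_index' (fun _ => rfl) (fun _ _ _ => rfl)]
        simp [Finsupp.sum_single_index]
      set e : Fin s →₀ ℕ := d' + Finsupp.single i 1 with he
      have hesum : e.sum (fun _ k => k) = d'.sum (fun _ k => k) + 1 := by
        rw [he, Finsupp.sum_add_index' (fun _ => rfl) (fun _ _ _ => rfl)]
        simp [Finsupp.sum_single_index]
      obtain ⟨r, hr, hrs⟩ := ih (e.sum fun _ k => k) (by omega) e rfl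
      refine ⟨r, hr, ?_⟩
      have h1 : (monomial d' c : MvPolynomial (Fin s) F) *
          (X i : MvPolynomial (Fin s) F) ^ (Fintype.card F) = monomial d c := by
        rw [X_pow_eq_monomial, monomial_mul, mul_one, ← hdd]
      have h2 : (monomial d' c : MvPolynomial (Fin s) F) *
          (X i : MvPolynomial (Fin s) F) = monomial e c := by
        rw [← pow_one (X i : MvPolynomial (Fin s) F), X_pow_eq_monomial, monomial_mul,
          mul_one, ← he]
      have key : (monomial d c : MvPolynomial (Fin s) F) - monomial e c =
          monomial d' c * ((X i : MvPolynomial (Fin s) F) ^ (Fintype.card F) - X i) := by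
        rw [mul_sub, h1, h2]
      have : (monomial d c : MvPolynomial (Fin s) F) - r =
          (monomial d c - monomial e c) + (monomial e c - r) := by ring
      rw [this, key]
      exact Ideal.add_mem _ (Ideal.mul_mem_left _ _
        (Ideal.subset_span ⟨i, rfl⟩)) hrs

private lemma poly_red {s : ℕ} (p : MvPolynomial (Fin s) F) :
    ∃ r ∈ restrictDegree (Fin s) F (Fintype.card F - 1),
      p - r ∈ Ideal.span (Set.range fun i : Fin s =>
        (X i : MvPolynomial (Fin s) F) ^ (Fintype.card F) - X i) := by
  choose r hr hrs using fun d : Fin s →₀ ℕ => monomial_red d (coeff d p)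
  refine ⟨∑ d ∈ p.support, r d, Submodule.sum_mem _ fun d _ => hr d, ?_⟩
  have heq : p - ∑ d ∈ p.support, r d =
      ∑ d ∈ p.support, (monomial d (coeff d p) - r d) := by
    rw [Finset.sum_sub_distrib, ← p.as_sum]
  rw [heq]
  exact Ideal.sum_mem _ fun d _ => hrs d

private lemma eval_mem_span_field_eqs {s : ℕ} (v : Fin s → F)
    {p : MvPolynomial (Fin s) F}
    (hp : p ∈ Ideal.span (Set.range fun i : Fin s =>
      (X i : MvPolynomial (Fin s) F) ^ (Fintype.card F) - X i)) :
    eval v p = 0 := by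
  have hle : Ideal.span (Set.range fun i : Fin s =>
      (X i : MvPolynomial (Fin s) F) ^ (Fintype.card F) - X i) ≤
      RingHom.ker (eval v) := by
    rw [Ideal.span_le]
    rintro _ ⟨i, rfl⟩
    simp [RingHom.mem_ker, FiniteField.pow_card]
  exact hle hp

private lemma mem_span_field_eqs_of_eval {s : ℕ} {p : MvPolynomial (Fin s) F}
    (h : ∀ v : Fin s → F, eval v p = 0) :
    p ∈ Ideal.span (Set.range fun i : Fin s =>
      (X i : MvPolynomial (Fin s) F) ^ (Fintype.card F) - X i) := by
  obtain ⟨r, hr, hrs⟩ := poly_red p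
  have h0 : ∀ v : Fin s → F, eval v r = 0 := fun v => by
    have h1 := eval_mem_span_field_eqs v hrs
    rw [map_sub, h v, zero_sub, neg_eq_zero] at h1
    exact h1
  have hr0 : r = 0 := by
    let e : Fin s ≃ ULift.{u} (Fin s) := Equiv.ulift.symm
    have hinj : Function.Injective (e : Fin s → ULift.{u} (Fin s)) := e.injective
    have hmem : rename (e : Fin s → ULift.{u} (Fin s)) r ∈
        restrictDegree (ULift.{u} (Fin s)) F (Fintype.card F - 1) := by
      rw [mem_restrictDegree]
      intro d hd i
      rw [support_rename_of_injective hinj, Finset.mem_image] at hd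
      obtain ⟨u', hu', rfl⟩ := hd
      rcases e.surjective i with ⟨a, rfl⟩
      rw [Finsupp.mapDomain_apply hinj]
      rw [mem_restrictDegree] at hr
      exact hr u' hu' a
    have hz : rename (e : Fin s → ULift.{u} (Fin s)) r = 0 := by
      refine eq_zero_of_eval_eq_zero (ULift.{u} (Fin s)) F _ (fun w => ?_) hmem
      rw [eval_rename]
      exact h0 _
    have := rename_injective (R := F) (e : Fin s → ULift.{u} (Fin s)) hinj
    apply this
    simpa using hz
  rw [hr0, sub_zero] at hrs
  exact hrs

variable [DecidableEq F]

private lemma eval_esymm_eq_zero {s : ℕ} (v : Fin s → F) (i : ℕ)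
    (h : (Finset.univ.filter fun j => v j ≠ 0).card < i) :
    eval v (esymm (Fin s) F i) = 0 := by
  rw [esymm, map_sum]
  refine Finset.sum_eq_zero fun T hT => ?_
  rw [mem_powersetCard] at hT
  rw [map_prod]
  simp only [eval_X]
  by_contra hne
  have hsub : T ⊆ Finset.univ.filter fun j => v j ≠ 0 := by
    intro j hj
    simp only [mem_filter, mem_univ, true_and]
    intro h0
    exact hne (Finset.prod_eq_zero hj h0)
  have := Finset.card_le_card hsub
  omega

private lemma eval_esymm_card {s : ℕ} (v : Fin s → F) :
    eval v (esymm (Fin s) F ((Finset.univ.filter fun j => v j ≠ 0).card)) =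
      ∏ j ∈ Finset.univ.filter (fun j => v j ≠ 0), v j := by
  set S := Finset.univ.filter fun j => v j ≠ 0 with hS
  rw [esymm, map_sum, Finset.sum_eq_single S]
  · rw [map_prod]; simp
  · intro T hT hTS
    rw [mem_powersetCard] at hT
    rw [map_prod]
    simp only [eval_X]
    obtain ⟨j, hjT, hj0⟩ : ∃ j ∈ T, v j = 0 := by
      by_contra hc
      push_neg at hc
      have hsub : T ⊆ S := fun j hj => mem_filter.2 ⟨mem_univ _, hc j hj⟩
      exact hTS (Finset.eq_of_subset_of_card_le hsub (by rw [hT.2]))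
    exact Finset.prod_eq_zero hjT hj0
  · intro hSn
    exact absurd (mem_powersetCard.2 ⟨subset_univ _, rfl⟩) hSn

end Aux

/-- **Vanishing ideal of the ball of Hamming weight `t`** over a finite field:
a polynomial vanishes on all vectors of weight at most `t` iff it lies in the ideal
generated by the elementary symmetric polynomials `σ_{t+1}, …, σ_s` together with the
field equations `xᵢ^q − xᵢ`. -/
theorem vanishing_ideal_weight_le {F : Type*} [Field F] [Fintype F] [DecidableEq F]
    {s t : ℕ} (ht1 : 1 ≤ t) (hts : t ≤ s) (p : MvPolynomial (Fin s) F) :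
    p ∈ Ideal.span
        ((Set.range fun i : Fin s => (X i) ^ (Fintype.card F) - X i) ∪
          {q | ∃ i : ℕ, t + 1 ≤ i ∧ i ≤ s ∧ q = esymm (Fin s) F i}) ↔
      ∀ v : Fin s → F,
        (Finset.univ.filter fun i => v i ≠ 0).card ≤ t → MvPolynomial.eval v p = 0 := by
  constructor
  · intro hp v hv
    have hle : Ideal.span
        ((Set.range fun i : Fin s => (X i : MvPolynomial (Fin s) F) ^ (Fintype.card F) - X i) ∪
          {q | ∃ i : ℕ, t + 1 ≤ i ∧ i ≤ s ∧ q = esymm (Fin s) F i}) ≤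
        RingHom.ker (eval v) := by
      rw [Ideal.span_le]
      rintro x (⟨i, rfl⟩ | hx)
      · simp [RingHom.mem_ker, FiniteField.pow_card]
      · obtain ⟨i, hi1, hi2, rfl⟩ := hx
        simp only [SetLike.mem_coe, RingHom.mem_ker]
        exact eval_esymm_eq_zero v i (by omega)
    exact hle hp
  · intro h
    set W : (Fin s → F) → ℕ := fun v => (Finset.univ.filter fun j => v j ≠ 0).card with hW
    set J := Ideal.span
        ((Set.range fun i : Fin s => (X i : MvPolynomial (Fin s) F) ^ (Fintype.card F) - X i) ∪
          {q | ∃ i : ℕ, t + 1 ≤ i ∧ i ≤ s ∧ q = esymm (Fin s) F i}) with hJ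
    set bad : Finset (Fin s → F) := Finset.univ.filter fun v => t < W v with hbad
    set P : MvPolynomial (Fin s) F :=
      ∑ v ∈ bad, C (eval v p * (∏ j ∈ Finset.univ.filter (fun j => v j ≠ 0), v j)⁻¹) *
        (indicator v * esymm (Fin s) F (W v)) with hP
    have hPJ : P ∈ J := by
      refine Ideal.sum_mem _ fun v hv => ?_
      rw [hbad, mem_filter] at hv
      rw [← mul_assoc]
      refine Ideal.mul_mem_left _ _ ?_
      refine Ideal.subset_span (Or.inr ⟨W v, by omega, ?_, rfl⟩)
      calc W v ≤ (Finset.univ : Finset (Fin s)).card := Finset.card_filter_le _ _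
        _ = s := by simp
    have hvanish : ∀ u : Fin s → F, eval u (p - P) = 0 := by
      intro u
      rw [map_sub]
      by_cases hu : W u ≤ t
      · have hPz : eval u P = 0 := by
          rw [hP, map_sum]
          refine Finset.sum_eq_zero fun v hv => ?_
          rw [hbad, mem_filter] at hv
          have hne : u ≠ v := fun huv => by rw [huv] at hu; omega
          simp [eval_indicator_apply_eq_zero u v hne]
        rw [h u hu, hPz, sub_zero]
      · push_neg at hu
        have humem : u ∈ bad := by rw [hbad, mem_filter]; exact ⟨mem_univ _, hu⟩
        have hPu : eval u P = eval u p := by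
          rw [hP, map_sum, Finset.sum_eq_single u]
          · have hprod : (∏ j ∈ Finset.univ.filter (fun j => u j ≠ 0), u j) ≠ 0 :=
              Finset.prod_ne_zero_iff.2 fun j hj => (mem_filter.1 hj).2
            simp only [map_mul, eval_C, eval_indicator_apply_eq_one, one_mul, hW]
            rw [eval_esymm_card u]
            field_simp
          · intro v hv hvu
            simp [eval_indicator_apply_eq_zero u v (Ne.symm hvu)]
          · intro hun; exact absurd humem hun
        rw [hPu, sub_self]
    have hfield : p - P ∈ J := by
      refine Ideal.span_mono Set.subset_union_left ?_
      exact mem_span_field_eqs_of_eval hvanish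
    have : p = (p - P) + P := by ring
    rw [this]
    exact Ideal.add_mem _ hfield hPJ
end

section
/- Let f : F_2^n → F_2 be a Boolean function and for 1 ≤ t ≤ 2^n let J_t^n(f) ⊂ F_2[a_0,...,a_n] be the ideal generated by the field equations a_i^2 − a_i together with all products m(g+f) over square-free monomials m of degree t, where g+f denotes the vector of polynomials (g_n(A,p_1)+f(p_1),...,g_n(A,p_{2^n})+f(p_{2^n})) with g_n(A,x) = a_0 + Σ a_i x_i and p_1,...,p_{2^n} an enumeration of F_2^n. Then V(J_t^n(f)) ≠ ∅ if and only if there exists an affine function α with d(f,α) ≤ t−1. -/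
open Finset MvPolynomial

/-- Hamming distance between two Boolean functions. -/
def bdist {n : ℕ} (f g : (Fin n → ZMod 2) → ZMod 2) : ℕ :=
  (Finset.univ.filter fun v => f v ≠ g v).card

/-- A Boolean function is affine if it is `x ↦ a₀ + Σ aᵢ xᵢ`. -/
def IsAffine {n : ℕ} (f : (Fin n → ZMod 2) → ZMod 2) : Prop :=
  ∃ a : Fin (n + 1) → ZMod 2, ∀ x, f x = a 0 + ∑ i : Fin n, a i.succ * x i

/-- Nonlinearity: the minimum distance from `f` to an affine function. -/
noncomputable def nonlin {n : ℕ} (f : (Fin n → ZMod 2) → ZMod 2) : ℕ :=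
  sInf {d | ∃ α, IsAffine α ∧ d = bdist f α}

/-- Walsh transform of a Boolean function. -/
def walsh {n : ℕ} (f : (Fin n → ZMod 2) → ZMod 2) (v : Fin n → ZMod 2) : ℤ :=
  ∑ y : Fin n → ZMod 2, (-1 : ℤ) ^ ((∑ i, v i * y i) + f y).val

/-- The affine polynomial `g_n(A, p) + f(p)` viewed in `F₂[a₀,…,aₙ]`. -/
noncomputable def gpoly {n : ℕ} (f : (Fin n → ZMod 2) → ZMod 2) (p : Fin n → ZMod 2) :
    MvPolynomial (Fin (n + 1)) (ZMod 2) :=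
  X 0 + (∑ i : Fin n, C (p i) * X i.succ) + C (f p)

/-- Simonetti's ideal `J_t^n(f)`: generated by the field equations together with the
evaluations of all square-free monomials of degree `t` at the vector
`(g_n(A,p₁)+f(p₁), …, g_n(A,p_{2^n})+f(p_{2^n}))`. -/
noncomputable def Jideal {n : ℕ} (t : ℕ) (f : (Fin n → ZMod 2) → ZMod 2) :
    Ideal (MvPolynomial (Fin (n + 1)) (ZMod 2)) :=
  Ideal.span
    ((Set.range fun i : Fin (n + 1) => (X i) ^ 2 - X i) ∪
      {q | ∃ T : Finset (Fin n → ZMod 2), T.card = t ∧ q = ∏ p ∈ T, gpoly f p})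

lemma eval_gpoly {n : ℕ} (f : (Fin n → ZMod 2) → ZMod 2) (p : Fin n → ZMod 2)
    (a : Fin (n + 1) → ZMod 2) :
    MvPolynomial.eval a (gpoly f p) = (a 0 + ∑ i : Fin n, a i.succ * p i) + f p := by
  simp [gpoly, mul_comm]

lemma zmod2_add_eq_zero_iff (x y : ZMod 2) : x + y = 0 ↔ x = y := by
  revert x y; decide

/-- **Simonetti's criterion**: `V(J_t^n(f)) ≠ ∅` iff some affine function is at
distance at most `t − 1` from `f`. -/
theorem Jideal_variety_nonempty_iff {n t : ℕ} (ht1 : 1 ≤ t) (ht2 : t ≤ 2 ^ n)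
    (f : (Fin n → ZMod 2) → ZMod 2) :
    (∃ a : Fin (n + 1) → ZMod 2, ∀ q ∈ Jideal t f, MvPolynomial.eval a q = 0) ↔
      ∃ a : Fin (n + 1) → ZMod 2,
        bdist f (fun x => a 0 + ∑ i : Fin n, a i.succ * x i) ≤ t - 1 := by
  constructor
  · rintro ⟨a, ha⟩
    refine ⟨a, ?_⟩
    by_contra h
    push_neg at h
    have hcard : t ≤ (Finset.univ.filter fun v =>
        f v ≠ (a 0 + ∑ i : Fin n, a i.succ * v i)).card := by
      have h2 : t - 1 + 1 ≤ bdist f (fun x => a 0 + ∑ i : Fin n, a i.succ * x i) :=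
        Nat.succ_le_of_lt h
      rw [Nat.sub_add_cancel ht1] at h2
      exact h2
    obtain ⟨T, hTsub, hTcard⟩ := Finset.exists_subset_card_eq hcard
    have hq : (∏ p ∈ T, gpoly f p) ∈ Jideal t f := by
      apply Ideal.subset_span
      exact Or.inr ⟨T, hTcard, rfl⟩
    have := ha _ hq
    rw [map_prod] at this
    obtain ⟨p, hpT, hp0⟩ := Finset.prod_eq_zero_iff.mp this
    have hpne := (Finset.mem_filter.mp (hTsub hpT)).2
    rw [eval_gpoly, zmod2_add_eq_zero_iff] at hp0
    exact hpne hp0.symm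
  · rintro ⟨a, ha⟩
    refine ⟨a, fun q hq => ?_⟩
    have : Jideal t f ≤ RingHom.ker (MvPolynomial.eval a) := by
      rw [Jideal, Ideal.span_le]
      rintro q (⟨i, rfl⟩ | ⟨T, hTcard, rfl⟩)
      · simp only [SetLike.mem_coe, RingHom.mem_ker, map_sub, map_pow, eval_X]
        have : ∀ x : ZMod 2, x ^ 2 - x = 0 := by decide
        exact this _
      · simp only [SetLike.mem_coe, RingHom.mem_ker, map_prod]
        have hD : ¬ T ⊆ (Finset.univ.filter fun v =>
            f v ≠ (a 0 + ∑ i : Fin n, a i.succ * v i)) := by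
          intro hsub
          have := Finset.card_le_card hsub
          have h3 : t ≤ t - 1 := le_trans (hTcard ▸ this) ha
          exact absurd (lt_of_le_of_lt h3 (Nat.sub_lt ht1 one_pos)) (lt_irrefl t)
        obtain ⟨p, hpT, hpD⟩ := Finset.not_subset.mp hD
        refine Finset.prod_eq_zero hpT ?_
        simp only [Finset.mem_filter, Finset.mem_univ, true_and, not_not] at hpD
        rw [eval_gpoly, zmod2_add_eq_zero_iff, hpD]
    exact this hq
end
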